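/- Let ψ : ℝ → ℝ be convex, even, and MLR-unbounded, i.e., for all Δ > 0 and s > 0, ψ(z/s) − ψ((z − Δ)/s) → ∞ as z → ∞. Let f = e^{−ψ} be a density. Then for fixed ε ≥ 0 and Δ > 0, the minimal scale s for which the mechanism q(d) + sX (X ~ f) is (ε, δ)-differentially private tends to infinity as δ → 0. -/

import Mathlib

/-!
Write `F` for the CDF of `f = e^{-ψ}`, `c = Δ / s` and `g(v) = f(v + c) - e^ε f(v)`, so that
`F(b + c) - e^ε F(b) = ∫_{v ≤ b} g`. Convexity makes the privacy loss monotone, and with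
evenness `g ≥ 0` left of `-t / s` and `g ≤ 0` right of it. Hence the half-line `b = -t / s`
maximises `F(b + c) - e^ε F(b)`, and this maximum is the left side of the `(ε, δ)` condition.
As `F` increases, for all `c ≥ c₀` it is at least `F(b + c₀) - e^ε F(b)`, which
MLR-unboundedness makes positive for `b` far to the left: scales `s ≤ Δ / c₀` fail once `δ` is
below that constant. Conversely `f ≤ f(0)` bounds the left side by `c f(0)`, so admissible
scales exist for every `δ > 0` and the infimum is not the junk value `sInf ∅ = 0`.
-/

open MeasureTheory Filter Topology Set Real

theorem ConvexOn.apply_zero_le_of_even {E : Type*} [AddCommGroup E] [Module ℝ E] {ψ : E → ℝ}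
    (hconv : ConvexOn ℝ univ ψ) (heven : ∀ x, ψ (-x) = ψ x) (x : E) : ψ 0 ≤ ψ x := by
  have h := hconv.2 (mem_univ x) (mem_univ (-x)) (by norm_num : (0 : ℝ) ≤ 1 / 2)
    (by norm_num : (0 : ℝ) ≤ 1 / 2) (by norm_num)
  simp only [smul_neg, add_neg_cancel, heven, smul_eq_mul] at h
  linarith

theorem ConvexOn.monotone_apply_add_sub {ψ : ℝ → ℝ} (hconv : ConvexOn ℝ univ ψ) {h : ℝ}
    (hh : 0 ≤ h) : Monotone fun x => ψ (x + h) - ψ x := by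
  intro p q hpq
  rcases (add_nonneg (sub_nonneg.2 hpq) hh).eq_or_lt with hdh | hdh
  · obtain rfl : q = p := by linarith
    exact le_rfl
  -- `p + h` and `q` are mirror-image convex combinations of `p` and `q + h`
  set d := q - p
  have hab : d / (d + h) + h / (d + h) = 1 := by field_simp
  have h₁ := hconv.2 (mem_univ p) (mem_univ (q + h)) (div_nonneg (sub_nonneg.2 hpq) hdh.le)
    (div_nonneg hh hdh.le) hab
  have h₂ := hconv.2 (mem_univ p) (mem_univ (q + h)) (div_nonneg hh hdh.le)
    (div_nonneg (sub_nonneg.2 hpq) hdh.le) (by rwa [add_comm])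
  simp only [smul_eq_mul] at h₁ h₂
  rw [show d / (d + h) * p + h / (d + h) * (q + h) = p + h by field_simp; ring] at h₁
  rw [show h / (d + h) * p + d / (d + h) * (q + h) = q by field_simp; ring] at h₂
  linear_combination h₁ + h₂ + (ψ p + ψ (q + h)) * hab

theorem setIntegral_Iic_comp_add_right {E : Type*} [NormedAddCommGroup E] [NormedSpace ℝ E]
    (f : ℝ → E) (b c : ℝ) : ∫ v in Iic b, f (v + c) = ∫ u in Iic (b + c), f u := by
  have := (measurePreserving_add_right volume c).setIntegral_preimage_emb
    (measurableEmbedding_addRight c) f (Iic (b + c))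
  rwa [preimage_add_const_Iic, add_sub_cancel_right] at this

theorem setIntegral_Iic_le_of_sign_change {g : ℝ → ℝ} {a b : ℝ}
    (ha : IntegrableOn g (Iic a)) (hb : IntegrableOn g (Iic b))
    (hpos : ∀ v < b, 0 ≤ g v) (hneg : ∀ v, b < v → g v ≤ 0) :
    ∫ v in Iic a, g v ≤ ∫ v in Iic b, g v := by
  rw [← sub_nonneg, intervalIntegral.integral_Iic_sub_Iic ha hb]
  rcases le_total a b with hab | hab
  · rw [intervalIntegral.integral_of_le hab, ← setIntegral_congr_set Ioo_ae_eq_Ioc]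
    exact setIntegral_nonneg measurableSet_Ioo fun v hv => hpos v hv.2
  · rw [intervalIntegral.integral_symm, neg_nonneg, intervalIntegral.integral_of_le hab]
    exact setIntegral_nonpos measurableSet_Ioc fun v hv => hneg v hv.1

/-- The privacy loss `log (f ((z - Δ) / s) / f (z / s))` at the output `z`, for `f = e^{-ψ}`. -/
noncomputable def privacyLoss (ψ : ℝ → ℝ) (Δ s z : ℝ) : ℝ := ψ (z / s) - ψ ((z - Δ) / s)

/-- At `b = -t / s` and `c = Δ / s` this is the left side `F ((Δ - t) / s) - e^ε F (-t / s)` of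
the `(ε, δ)` condition, `F` being the CDF of `e^{-ψ}`. -/
noncomputable def cdfGap (ψ : ℝ → ℝ) (ε b c : ℝ) : ℝ :=
  (∫ u in Iic (b + c), exp (-ψ u)) - exp ε * ∫ u in Iic b, exp (-ψ u)

section

variable {ψ : ℝ → ℝ} {ε Δ s t : ℝ}

theorem monotone_privacyLoss (hconv : ConvexOn ℝ univ ψ) (hΔ : 0 ≤ Δ) (hs : 0 ≤ s) :
    Monotone (privacyLoss ψ Δ s) := by
  have hmono := (hconv.monotone_apply_add_sub (div_nonneg hΔ hs)).comp
    fun z w hzw => div_le_div_of_nonneg_right (sub_le_sub_right hzw Δ) hs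
  convert hmono using 1
  funext z
  simp [privacyLoss, sub_div]

theorem privacyLoss_neg_mul (heven : ∀ x, ψ (-x) = ψ x) (hs : s ≠ 0) (v : ℝ) :
    privacyLoss ψ Δ s (-(s * v)) = ψ v - ψ (v + Δ / s) := by
  rw [privacyLoss, show -(s * v) / s = -v by field_simp,
    show (-(s * v) - Δ) / s = -(v + Δ / s) by field_simp; ring, heven, heven]

theorem isLUB_privacyLoss_sublevel (hconv : ConvexOn ℝ univ ψ) (heven : ∀ x, ψ (-x) = ψ x)
    (hmlr : Tendsto (privacyLoss ψ Δ s) atTop atTop) (hε : 0 ≤ ε) :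
    IsLUB {z | privacyLoss ψ Δ s z ≤ ε} (sSup {z | privacyLoss ψ Δ s z ≤ ε}) := by
  refine isLUB_csSup ⟨0, ?_⟩ ?_
  · have := hconv.apply_zero_le_of_even heven ((0 - Δ) / s)
    show privacyLoss ψ Δ s 0 ≤ ε
    rw [privacyLoss, zero_div]
    linarith
  · obtain ⟨z₀, hz₀⟩ := eventually_atTop.mp (hmlr.eventually_gt_atTop ε)
    exact ⟨z₀, fun z hz => not_lt.mp fun hlt => (hz₀ z hlt.le).not_ge hz⟩

theorem sign_change_of_isLUB (hconv : ConvexOn ℝ univ ψ) (heven : ∀ x, ψ (-x) = ψ x)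
    (hΔ : 0 ≤ Δ) (hs : 0 < s) (ht : IsLUB {z | privacyLoss ψ Δ s z ≤ ε} t) :
    (∀ v < -t / s, 0 ≤ exp (-ψ (v + Δ / s)) - exp ε * exp (-ψ v)) ∧
      ∀ v, -t / s < v → exp (-ψ (v + Δ / s)) - exp ε * exp (-ψ v) ≤ 0 := by
  have hloss := privacyLoss_neg_mul (Δ := Δ) heven hs.ne'
  refine ⟨fun v hv => ?_, fun v hv => ?_⟩
  · have hlt : t < -(s * v) := by rw [lt_div_iff₀ hs] at hv; linarith
    have : ε < privacyLoss ψ Δ s (-(s * v)) := not_le.mp fun hle => hlt.not_ge (ht.1 hle)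
    rw [hloss] at this
    rw [sub_nonneg, ← exp_add, exp_le_exp]
    linarith
  · have hlt : -(s * v) < t := by rw [div_lt_iff₀ hs] at hv; linarith
    obtain ⟨z, hz, hvz, -⟩ := ht.exists_between hlt
    have : privacyLoss ψ Δ s (-(s * v)) ≤ ε :=
      (monotone_privacyLoss hconv hΔ hs.le hvz.le).trans hz
    rw [hloss] at this
    rw [sub_nonpos, ← exp_add, exp_le_exp]
    linarith

theorem cdfGap_eq_setIntegral (hf : Integrable fun x => exp (-ψ x)) (b c : ℝ) :
    cdfGap ψ ε b c = ∫ v in Iic b, (exp (-ψ (v + c)) - exp ε * exp (-ψ v)) := by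
  rw [cdfGap, ← setIntegral_Iic_comp_add_right (fun u => exp (-ψ u)), integral_sub
    (hf.comp_add_right c).integrableOn (hf.const_mul _).integrableOn, integral_const_mul]

theorem cdfGap_le (hf : Integrable fun x => exp (-ψ x)) (hmin : ∀ x, ψ 0 ≤ ψ x) (hε : 0 ≤ ε)
    {c : ℝ} (hc : 0 ≤ c) (b : ℝ) :
    cdfGap ψ ε b c ≤ c * exp (-ψ 0) := by
  have hF : 0 ≤ ∫ u in Iic b, exp (-ψ u) :=
    setIntegral_nonneg measurableSet_Iic fun u _ => (exp_pos _).le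
  have hincr :
      (∫ u in Iic (b + c), exp (-ψ u)) - ∫ u in Iic b, exp (-ψ u) ≤ c * exp (-ψ 0) := by
    rw [intervalIntegral.integral_Iic_sub_Iic hf.integrableOn hf.integrableOn]
    calc _ ≤ ‖∫ u in b..b + c, exp (-ψ u)‖ := le_norm_self _
      _ ≤ exp (-ψ 0) * |b + c - b| :=
        intervalIntegral.norm_integral_le_of_norm_le_const fun u _ => by
          rw [norm_of_nonneg (exp_pos _).le]
          exact exp_le_exp.2 (neg_le_neg (hmin u))
      _ = c * exp (-ψ 0) := by rw [add_sub_cancel_left, abs_of_nonneg hc, mul_comm]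
  rw [cdfGap]
  nlinarith [one_le_exp hε]

theorem cdfGap_mono_right (hf : Integrable fun x => exp (-ψ x)) (b : ℝ) {c c' : ℝ}
    (hcc' : c ≤ c') :
    cdfGap ψ ε b c ≤ cdfGap ψ ε b c' := by
  rw [cdfGap, cdfGap, sub_le_sub_iff_right]
  exact setIntegral_mono_set hf.integrableOn (ae_of_all _ fun u => (exp_pos _).le)
    (Iic_subset_Iic.2 (by linarith)).eventuallyLE

theorem exists_cdfGap_pos (hf : Integrable fun x => exp (-ψ x)) (heven : ∀ x, ψ (-x) = ψ x)
    {c : ℝ} (hmlr : Tendsto (fun z => ψ z - ψ (z - c)) atTop atTop) : ∃ b, 0 < cdfGap ψ ε b c := by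
  obtain ⟨z₀, hz₀⟩ := eventually_atTop.mp (hmlr.eventually_gt_atTop ε)
  have hpos : ∀ v ∈ Iic (-z₀), 0 < exp (-ψ (v + c)) - exp ε * exp (-ψ v) := by
    intro v hv
    have := hz₀ (-v) (by linarith [mem_Iic.mp hv])
    rw [show -v - c = -(v + c) by ring, heven, heven] at this
    rw [sub_pos, ← exp_add, exp_lt_exp]
    linarith
  have hg : Integrable fun v => exp (-ψ (v + c)) - exp ε * exp (-ψ v) :=
    (hf.comp_add_right c).sub (hf.const_mul _)
  refine ⟨-z₀, ?_⟩
  rw [cdfGap_eq_setIntegral hf, setIntegral_pos_iff_support_of_nonneg_ae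
    ((ae_restrict_iff' measurableSet_Iic).2 (ae_of_all _ fun v hv => (hpos v hv).le))
    hg.integrableOn, inter_eq_right.2 fun v hv => Function.mem_support.2 (hpos v hv).ne',
    Real.volume_Iic]
  exact ENNReal.zero_lt_top

theorem cdfGap_le_cdfGap_of_isLUB (hf : Integrable fun x => exp (-ψ x))
    (hconv : ConvexOn ℝ univ ψ) (heven : ∀ x, ψ (-x) = ψ x)
    (hΔ : 0 ≤ Δ) (hs : 0 < s) (ht : IsLUB {z | privacyLoss ψ Δ s z ≤ ε} t) (b : ℝ) :
    cdfGap ψ ε b (Δ / s) ≤ cdfGap ψ ε (-t / s) (Δ / s) := by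
  obtain ⟨hpos, hneg⟩ := sign_change_of_isLUB hconv heven hΔ hs ht
  have hg : Integrable fun v => exp (-ψ (v + Δ / s)) - exp ε * exp (-ψ v) :=
    (hf.comp_add_right _).sub (hf.const_mul _)
  rw [cdfGap_eq_setIntegral hf, cdfGap_eq_setIntegral hf]
  exact setIntegral_Iic_le_of_sign_change hg.integrableOn hg.integrableOn hpos hneg

end

/-- For an MLR-unbounded convex even `ψ` with density `f = e^{−ψ}` supported
everywhere, the minimal scale achieving `(ε, δ)`-differential privacy tends to
infinity as `δ → 0⁺`. -/
theorem scale_blows_up (ψ : ℝ → ℝ) (hconv : ConvexOn ℝ Set.univ ψ)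
    (heven : ∀ x, ψ (-x) = ψ x)
    (hmlr : ∀ Δ s : ℝ, 0 < Δ → 0 < s →
      Tendsto (fun z => ψ (z / s) - ψ ((z - Δ) / s)) atTop atTop)
    (hdens : ∫ x, Real.exp (-ψ x) = 1)
    (ε Δ : ℝ) (hε : 0 ≤ ε) (hΔ : 0 < Δ) :
    Tendsto
      (fun δ => sInf {s : ℝ | 0 < s ∧ ∀ t : ℝ,
        IsLUB {z : ℝ | ψ (z / s) - ψ ((z - Δ) / s) ≤ ε} t →
        (∫ u in Set.Iic ((Δ - t) / s), Real.exp (-ψ u)) -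
            Real.exp ε * (∫ u in Set.Iic (-t / s), Real.exp (-ψ u)) ≤ δ})
      (nhdsWithin 0 (Set.Ioi (0:ℝ))) atTop := by
  have hf : Integrable fun x => exp (-ψ x) := Integrable.of_integral_ne_zero (by simp [hdens])
  have hgap : ∀ s t : ℝ, (∫ u in Iic ((Δ - t) / s), exp (-ψ u)) -
      exp ε * (∫ u in Iic (-t / s), exp (-ψ u)) = cdfGap ψ ε (-t / s) (Δ / s) := fun s t => by
    rw [cdfGap, neg_div, ← sub_eq_neg_add, sub_div]
  refine tendsto_atTop.2 fun M => ?_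
  obtain ⟨b, hb⟩ := exists_cdfGap_pos (ε := ε) hf heven
    (by simpa only [div_one] using hmlr (Δ / max M 1) 1 (by positivity) one_pos)
  filter_upwards [Ioo_mem_nhdsGT hb] with δ ⟨hδ, hδb⟩
  refine le_csInf ⟨Δ * exp (-ψ 0) / δ, by positivity, fun t _ => ?_⟩ ?_
  · rw [hgap]
    refine (cdfGap_le hf (hconv.apply_zero_le_of_even heven) hε (by positivity) _).trans_eq ?_
    field_simp
  rintro s ⟨hs, hsδ⟩
  by_contra! hsM
  have hcs : Δ / max M 1 ≤ Δ / s :=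
    div_le_div_of_nonneg_left hΔ.le hs (hsM.le.trans (le_max_left _ _))
  have ht := isLUB_privacyLoss_sublevel hconv heven (hmlr Δ s hΔ hs) hε
  refine hδb.not_ge ?_
  calc cdfGap ψ ε b (Δ / max M 1) ≤ cdfGap ψ ε b (Δ / s) := cdfGap_mono_right hf b hcs
    _ ≤ cdfGap ψ ε (-_ / s) (Δ / s) := cdfGap_le_cdfGap_of_isLUB hf hconv heven hΔ.le hs ht b
    _ ≤ δ := hgap s _ ▸ hsδ _ ht
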